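/- For any graph G with no isolated vertex, ∂_{2p}(G) ≤ n(G) - γ_t(G), where γ_t(G) is the total domination number; furthermore equality holds if and only if G has a dominating set which is a 2-packing and γ_t(G) = 2γ(G). -/

import Mathlib

open Finset

variable {V : Type*}

/-- `S` is a 2-packing: closed neighbourhoods of distinct vertices of `S` are disjoint. -/
def IsPacking2 (G : SimpleGraph V) (S : Finset V) : Prop :=
  (S : Set V).Pairwise fun u v =>
    Disjoint (G.neighborSet u ∪ {u}) (G.neighborSet v ∪ {v})

/-- The external neighbourhood of `S`: vertices outside `S` with a neighbour in `S`. -/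
def extN (G : SimpleGraph V) [Fintype V] [DecidableEq V] [DecidableRel G.Adj]
    (S : Finset V) : Finset V :=
  Finset.univ.filter fun v => v ∉ S ∧ ∃ u ∈ S, G.Adj u v

/-- The differential of a set `S`: `|N_e(S)| - |S|`. -/
def diffSet (G : SimpleGraph V) [Fintype V] [DecidableEq V] [DecidableRel G.Adj]
    (S : Finset V) : ℤ :=
  ((extN G S).card : ℤ) - S.card

/-- The 2-packing differential of `G`. -/
noncomputable def pdiff2 (G : SimpleGraph V) [Fintype V] [DecidableEq V]
    [DecidableRel G.Adj] : ℤ :=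
  sSup {d : ℤ | ∃ S : Finset V, IsPacking2 G S ∧ d = diffSet G S}

/-- The packing number of `G`: maximum cardinality of a 2-packing. -/
noncomputable def packNum (G : SimpleGraph V) [Fintype V] : ℕ :=
  sSup {n : ℕ | ∃ S : Finset V, IsPacking2 G S ∧ n = S.card}

/-- `G` has no isolated vertex. -/
def NoIsolated (G : SimpleGraph V) : Prop := ∀ v : V, ∃ u, G.Adj v u

/-- `S` is a dominating set of `G`. -/
def IsDom (G : SimpleGraph V) (S : Finset V) : Prop :=
  ∀ v, v ∉ S → ∃ u ∈ S, G.Adj u v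

/-- `S` is a total dominating set of `G`. -/
def IsTotalDom (G : SimpleGraph V) (S : Finset V) : Prop :=
  ∀ v : V, ∃ u ∈ S, G.Adj u v

/-- The total domination number of `G`. -/
noncomputable def totalDomNum (G : SimpleGraph V) [Fintype V] : ℕ :=
  sInf {n : ℕ | ∃ S : Finset V, IsTotalDom G S ∧ n = S.card}

/-- The domination number of `G`. -/
noncomputable def domNum (G : SimpleGraph V) [Fintype V] : ℕ :=
  sInf {n : ℕ | ∃ S : Finset V, IsDom G S ∧ n = S.card}

/-!
For any set `S`, write `A` for the vertices outside `N[S] = S ∪ N_e(S)`. Adding to `S` one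
neighbour of every vertex of `S ∪ A` gives a total dominating set, so
`γ_t ≤ 2|S| + |A| = n - (|N_e(S)| - |S|)`. In the extremal case take, among the 2-packings
realising `∂_{2p}`, one of maximum size. A vertex of `A` adjacent to `N_e(S)` would save one
vertex in that total dominating set, and a vertex of `A` with no such neighbour could be added to
the packing without lowering its differential. So `A = ∅`: `S` dominates and `γ_t = 2|S|`,
and `|S| = γ` because a 2-packing is never larger than a dominating set.
-/

section Packing

variable {G : SimpleGraph V} {S D : Finset V}

theorem IsPacking2.card_le_of_isDom (hS : IsPacking2 G S) (hD : IsDom G D) :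
    S.card ≤ D.card := by
  have hpick : ∀ s ∈ S, ∃ d ∈ D, d ∈ G.neighborSet s ∪ {s} := by
    intro s _
    by_cases hsD : s ∈ D
    · exact ⟨s, hsD, Or.inr rfl⟩
    · obtain ⟨u, hu, hadj⟩ := hD s hsD
      exact ⟨u, hu, Or.inl hadj.symm⟩
  choose! f hfD hfN using hpick
  -- distinct vertices of a 2-packing cannot be dominated by the same vertex
  refine card_le_card_of_injOn f hfD fun s₁ h₁ s₂ h₂ hf => ?_
  by_contra hne
  exact Set.disjoint_left.1 (hS h₁ h₂ hne) (hfN s₁ h₁) (hf ▸ hfN s₂ h₂)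

theorem IsPacking2.card_eq_domNum [Fintype V] (hS : IsPacking2 G S) (hD : IsDom G S) :
    S.card = domNum G := by
  refine le_antisymm ?_ (Nat.sInf_le ⟨S, hD, rfl⟩)
  have hne : {n : ℕ | ∃ D : Finset V, IsDom G D ∧ n = D.card}.Nonempty :=
    ⟨_, univ, fun v hv => absurd (mem_univ v) hv, rfl⟩
  obtain ⟨D, hD', hDcard⟩ := Nat.sInf_mem hne
  rw [domNum, hDcard]
  exact hS.card_le_of_isDom hD'

end Packing

section Finite

variable [Fintype V] [DecidableEq V] {G : SimpleGraph V} [DecidableRel G.Adj]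
  {S : Finset V}

theorem mem_extN {v : V} : v ∈ extN G S ↔ v ∉ S ∧ ∃ u ∈ S, G.Adj u v := by
  simp [extN]

theorem disjoint_extN : Disjoint S (extN G S) :=
  disjoint_left.2 fun _ hv hv' => (mem_extN.1 hv').1 hv

theorem card_add_card_extN_add_card_compl :
    S.card + (extN G S).card + (S ∪ extN G S)ᶜ.card = Fintype.card V := by
  rw [card_compl, ← card_union_of_disjoint disjoint_extN]
  have := card_le_univ (S ∪ extN G S)
  omega

theorem isDom_iff_compl_eq_empty : IsDom G S ↔ (S ∪ extN G S)ᶜ = ∅ := by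
  simp only [IsDom, eq_empty_iff_forall_notMem, mem_compl, mem_union, mem_extN]
  grind

theorem IsPacking2.insert {a : V} (hS : IsPacking2 G S) (ha : a ∉ S ∪ extN G S)
    (hN : ∀ x, G.Adj a x → x ∉ S ∪ extN G S) : IsPacking2 G (insert a S) := by
  have hclosed : ∀ s ∈ S, ∀ x ∈ G.neighborSet s ∪ {s}, x ∈ S ∪ extN G S := by
    rintro s hs x (hx | rfl)
    · by_cases hxS : x ∈ S
      · exact mem_union_left _ hxS
      · exact mem_union_right _ (mem_extN.2 ⟨hxS, s, hs, hx⟩)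
    · exact mem_union_left _ hs
  have hdisj : ∀ s ∈ S, Disjoint (G.neighborSet a ∪ {a}) (G.neighborSet s ∪ {s}) := by
    intro s hs
    refine Set.disjoint_left.2 ?_
    rintro x (hx | rfl) hxs
    · exact hN x hx (hclosed s hs x hxs)
    · exact ha (hclosed s hs x hxs)
  rw [IsPacking2, coe_insert]
  exact Set.Pairwise.insert hS fun s hs _ => ⟨hdisj s hs, (hdisj s hs).symm⟩

theorem extN_insert {a : V} (ha : a ∉ S ∪ extN G S)
    (hN : ∀ x, G.Adj a x → x ∉ S ∪ extN G S) :
    extN G (insert a S) = extN G S ∪ G.neighborFinset a := by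
  ext v
  simp only [mem_union, mem_extN, SimpleGraph.mem_neighborFinset, mem_insert] at ha hN ⊢
  grind [G.ne_of_adj]

theorem diffSet_insert {a : V} (ha : a ∉ S ∪ extN G S)
    (hN : ∀ x, G.Adj a x → x ∉ S ∪ extN G S) :
    diffSet G (insert a S) = diffSet G S + G.degree a - 1 := by
  have hdisj : Disjoint (extN G S) (G.neighborFinset a) :=
    disjoint_right.2 fun x hx hx' =>
      hN x ((G.mem_neighborFinset a x).1 hx) (mem_union_right _ hx')
  have haS : a ∉ S := fun h => ha (mem_union_left _ h)
  rw [diffSet, diffSet, extN_insert ha hN, card_union_of_disjoint hdisj,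
    card_insert_of_notMem haS, G.card_neighborFinset_eq_degree]
  push_cast
  ring

theorem totalDomNum_le_card_add_card {W : Finset V}
    (hW : ∀ v ∉ extN G S, ∃ w ∈ W, G.Adj w v) : totalDomNum G ≤ S.card + W.card := by
  have hT : IsTotalDom G (S ∪ W) := by
    intro v
    by_cases hv : v ∈ extN G S
    · obtain ⟨-, u, hu, hadj⟩ := mem_extN.1 hv
      exact ⟨u, mem_union_left _ hu, hadj⟩
    · obtain ⟨w, hw, hadj⟩ := hW v hv
      exact ⟨w, mem_union_right _ hw, hadj⟩
  calc totalDomNum G ≤ (S ∪ W).card := Nat.sInf_le ⟨S ∪ W, hT, rfl⟩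
    _ ≤ S.card + W.card := card_union_le S W

theorem totalDomNum_le (h : NoIsolated G) (S : Finset V) :
    totalDomNum G ≤ 2 * S.card + (S ∪ extN G S)ᶜ.card := by
  choose nbr hnbr using h
  have hW : ∀ v ∉ extN G S, ∃ w ∈ (S ∪ (S ∪ extN G S)ᶜ).image nbr, G.Adj w v := by
    intro v hv
    refine ⟨nbr v, mem_image_of_mem _ ?_, (hnbr v).symm⟩
    by_cases hvS : v ∈ S
    · exact mem_union_left _ hvS
    · exact mem_union_right _ (by simp [hvS, hv])
  have := totalDomNum_le_card_add_card hW
  have := (card_image_le (f := nbr)).trans (card_union_le S (S ∪ extN G S)ᶜ)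
  omega

-- `b` is the neighbour chosen both for `a` and for a neighbour `s ∈ S` of `b`.
theorem totalDomNum_lt (h : NoIsolated G) {a b : V} (ha : a ∈ (S ∪ extN G S)ᶜ)
    (hb : b ∈ extN G S) (hab : G.Adj a b) :
    totalDomNum G < 2 * S.card + (S ∪ extN G S)ᶜ.card := by
  choose nbr hnbr using h
  obtain ⟨-, s, hs, hsb⟩ := mem_extN.1 hb
  set A := (S ∪ extN G S)ᶜ
  have hW : ∀ v ∉ extN G S, ∃ w ∈ insert b ((S.erase s ∪ A.erase a).image nbr),
      G.Adj w v := by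
    intro v hv
    by_cases hvs : v = s
    · exact ⟨b, mem_insert_self _ _, hvs ▸ hsb.symm⟩
    by_cases hva : v = a
    · exact ⟨b, mem_insert_self _ _, hva ▸ hab.symm⟩
    refine ⟨nbr v, mem_insert_of_mem (mem_image_of_mem _ ?_), (hnbr v).symm⟩
    by_cases hvS : v ∈ S
    · exact mem_union_left _ (mem_erase.2 ⟨hvs, hvS⟩)
    · exact mem_union_right _ (mem_erase.2 ⟨hva, by simp [A, hvS, hv]⟩)
  have := totalDomNum_le_card_add_card hW
  have := card_insert_le b ((S.erase s ∪ A.erase a).image nbr)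
  have := card_image_le (s := S.erase s ∪ A.erase a) (f := nbr)
  have := card_union_le (S.erase s) (A.erase a)
  have := card_erase_add_one hs
  have := card_erase_add_one ha
  omega

theorem totalDomNum_add_diffSet_le (h : NoIsolated G) (S : Finset V) :
    (totalDomNum G : ℤ) + diffSet G S ≤ Fintype.card V := by
  have := totalDomNum_le h S
  have := card_add_card_extN_add_card_compl (G := G) (S := S)
  rw [diffSet]
  omega

theorem isGreatest_pdiff2 :
    IsGreatest {d : ℤ | ∃ S : Finset V, IsPacking2 G S ∧ d = diffSet G S} (pdiff2 G) := by
  have hne : {d : ℤ | ∃ S : Finset V, IsPacking2 G S ∧ d = diffSet G S}.Nonempty :=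
    ⟨_, ∅, by simp [IsPacking2], rfl⟩
  have hfin : {d : ℤ | ∃ S : Finset V, IsPacking2 G S ∧ d = diffSet G S}.Finite :=
    (Set.finite_range (diffSet G)).subset fun _ ⟨S, _, hd⟩ => ⟨S, hd.symm⟩
  exact ⟨hne.csSup_mem hfin, fun _ hd => le_csSup hfin.bddAbove hd⟩

theorem IsPacking2.diffSet_le_pdiff2 (hS : IsPacking2 G S) :
    diffSet G S ≤ pdiff2 G :=
  isGreatest_pdiff2.2 ⟨S, hS, rfl⟩

theorem pdiff2_le (h : NoIsolated G) : pdiff2 G ≤ Fintype.card V - totalDomNum G := by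
  obtain ⟨S, -, hS⟩ := (isGreatest_pdiff2 (G := G)).1
  have := totalDomNum_add_diffSet_le h S
  omega

theorem exists_isPacking2_isDom_of_pdiff2_eq (h : NoIsolated G)
    (heq : pdiff2 G = Fintype.card V - totalDomNum G) :
    ∃ S : Finset V, IsPacking2 G S ∧ IsDom G S ∧ totalDomNum G = 2 * S.card := by
  classical
  obtain ⟨S₀, hS₀, hd₀⟩ := (isGreatest_pdiff2 (G := G)).1
  obtain ⟨S, hSmem, hmax⟩ := exists_max_image
    (univ.filter fun S => IsPacking2 G S ∧ diffSet G S = pdiff2 G) card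
    ⟨S₀, mem_filter.2 ⟨mem_univ _, hS₀, hd₀.symm⟩⟩
  obtain ⟨hS, hSd⟩ := (mem_filter.1 hSmem).2
  have hγ : totalDomNum G = 2 * S.card + (S ∪ extN G S)ᶜ.card := by
    have := card_add_card_extN_add_card_compl (G := G) (S := S)
    rw [diffSet] at hSd
    omega
  have hA : (S ∪ extN G S)ᶜ = ∅ := by
    refine eq_empty_iff_forall_notMem.2 fun a ha => ?_
    by_cases hb : ∃ b ∈ extN G S, G.Adj a b
    · obtain ⟨b, hb, hab⟩ := hb
      exact (totalDomNum_lt h ha hb hab).ne hγ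
    push Not at hb
    have ha' : a ∉ S ∪ extN G S := mem_compl.1 ha
    have hN : ∀ x, G.Adj a x → x ∉ S ∪ extN G S := by
      intro x hax hx
      rcases mem_union.1 hx with hxS | hxN
      · exact ha' (mem_union_right _ (mem_extN.2
          ⟨fun haS => ha' (mem_union_left _ haS), x, hxS, hax.symm⟩))
      · exact hb x hxN hax
    have hpack := hS.insert ha' hN
    have hdeg : 0 < G.degree a := (G.degree_pos_iff_exists_adj a).2 (h a)
    have hd : diffSet G (insert a S) = pdiff2 G := by
      refine le_antisymm hpack.diffSet_le_pdiff2 ?_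
      rw [diffSet_insert ha' hN]
      omega
    have := hmax _ (mem_filter.2 ⟨mem_univ _, hpack, hd⟩)
    rw [card_insert_of_notMem fun haS => ha' (mem_union_left _ haS)] at this
    omega
  exact ⟨S, hS, isDom_iff_compl_eq_empty.2 hA, by simpa [hA] using hγ⟩

end Finite

theorem stmt13 {V : Type*} [Fintype V] [DecidableEq V] (G : SimpleGraph V)
    [DecidableRel G.Adj] (h : NoIsolated G) :
    pdiff2 G ≤ (Fintype.card V : ℤ) - totalDomNum G ∧
      (pdiff2 G = (Fintype.card V : ℤ) - totalDomNum G ↔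
        (∃ S : Finset V, IsPacking2 G S ∧ IsDom G S) ∧
          totalDomNum G = 2 * domNum G) := by
  refine ⟨pdiff2_le h, fun heq => ?_, ?_⟩
  · obtain ⟨S, hS, hD, hγ⟩ := exists_isPacking2_isDom_of_pdiff2_eq h heq
    exact ⟨⟨S, hS, hD⟩, hS.card_eq_domNum hD ▸ hγ⟩
  · rintro ⟨⟨S, hS, hD⟩, hγ⟩
    rw [← hS.card_eq_domNum hD] at hγ
    have hcard := card_add_card_extN_add_card_compl (G := G) (S := S)
    rw [isDom_iff_compl_eq_empty.1 hD, card_empty] at hcard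
    have hle := hS.diffSet_le_pdiff2
    have := pdiff2_le h
    rw [diffSet] at hle
    omega
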